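/- arXiv:1807.05885 — 4 statements merged into one kernel-verified Lean document; each statement's English description precedes it below -/
import Mathlib

section
/- Let R = ℂ[x,y,z]/(x² + y² + z² − 1) and A₂ = [[(x − iy)², −4z], [z(z² − 2)/4, −(x + iy)²]] with entries in R. Then A₂ · Ā₂ = I₂, where Ā₂ is obtained from A₂ by conjugating coefficients (i ↦ −i). In particular det A₂ = −1. -/
open MvPolynomial Matrix

noncomputable section

def Isph : Ideal (MvPolynomial (Fin 3) ℂ) :=
  Ideal.span {X 0 ^ 2 + X 1 ^ 2 + X 2 ^ 2 - 1}

/-- `R = ℂ[x,y,z]/(x² + y² + z² − 1)`. -/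
abbrev Rc : Type := MvPolynomial (Fin 3) ℂ ⧸ Isph

def xR : Rc := Ideal.Quotient.mk Isph (X 0)
def yR : Rc := Ideal.Quotient.mk Isph (X 1)
def zR : Rc := Ideal.Quotient.mk Isph (X 2)
def iR : Rc := Ideal.Quotient.mk Isph (C Complex.I)

/-- `A₂ = [[(x − iy)², −4z], [z(z² − 2)/4, −(x + iy)²]]`. -/
def A2 : Matrix (Fin 2) (Fin 2) Rc :=
  !![(xR - iR * yR) ^ 2, -(4 * zR);
     ((4 : ℂ)⁻¹ : ℂ) • (zR * (zR ^ 2 - 2)), -(xR + iR * yR) ^ 2]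

/-- `Ā₂ = [[(x + iy)², −4z], [z(z² − 2)/4, −(x − iy)²]]`, the coefficientwise conjugate. -/
def A2bar : Matrix (Fin 2) (Fin 2) Rc :=
  !![(xR + iR * yR) ^ 2, -(4 * zR);
     ((4 : ℂ)⁻¹ : ℂ) • (zR * (zR ^ 2 - 2)), -(xR - iR * yR) ^ 2]

/-- The image of `1/4` in `R`. -/
def cR : Rc := algebraMap ℂ Rc (4⁻¹)

lemma hq (t : Rc) : ((4 : ℂ)⁻¹ : ℂ) • t = cR * t := by
  unfold cR; exact Algebra.smul_def ((4 : ℂ)⁻¹) t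

lemma hc' : 4 * cR = 1 := by
  rw [cR, show (4 : Rc) = algebraMap ℂ Rc 4 from (map_ofNat (algebraMap ℂ Rc) 4).symm,
    ← RingHom.map_mul]
  norm_num

lemma hs' : xR ^ 2 + yR ^ 2 + zR ^ 2 = 1 := by
  have h0 : (Ideal.Quotient.mk Isph) (X 0 ^ 2 + X 1 ^ 2 + X 2 ^ 2 - 1) = 0 :=
    Ideal.Quotient.eq_zero_iff_mem.mpr (Ideal.subset_span rfl)
  have h1 : xR ^ 2 + yR ^ 2 + zR ^ 2 - 1 = 0 := by
    show (Ideal.Quotient.mk Isph (X 0)) ^ 2 + (Ideal.Quotient.mk Isph (X 1)) ^ 2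
      + (Ideal.Quotient.mk Isph (X 2)) ^ 2 - 1 = 0
    rw [← map_pow, ← map_pow, ← map_pow, ← map_add, ← map_add,
      ← map_one (Ideal.Quotient.mk Isph), ← map_sub]
    exact h0
  linear_combination h1

lemma hi' : iR ^ 2 = -1 := by
  show (Ideal.Quotient.mk Isph (C Complex.I)) ^ 2 = -1
  rw [← map_pow, ← C_pow, Complex.I_sq]
  simp

/-- `A₂ · Ā₂ = I₂`; in particular `det A₂ = −1`. -/
theorem A2_real_structure : A2 * A2bar = 1 ∧ A2.det = -1 := by
  have hc := hc'
  have hi := hi'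
  have hs := hs'
  constructor
  · ext i j
    fin_cases i <;> fin_cases j <;>
      (simp only [A2, A2bar, Matrix.mul_apply, Fin.sum_univ_two, Fin.isValue, Matrix.cons_val',
        Matrix.cons_val_zero, Matrix.cons_val_one, Matrix.head_cons, Matrix.empty_val',
        Matrix.cons_val_fin_one, Matrix.head_fin_const, Matrix.of_apply, Matrix.one_apply,
        hq]; norm_num)
    · linear_combination (2*(1-zR^2) + (xR^2+yR^2+zR^2-1)) * hs +
        (-2*(xR^2+yR^2)*yR^2 + (iR^2+1)*yR^4) * hi + (-(zR^4-2*zR^2)) * hc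
    · ring
    · ring
    · linear_combination (2*(1-zR^2) + (xR^2+yR^2+zR^2-1)) * hs +
        (-2*(xR^2+yR^2)*yR^2 + (iR^2+1)*yR^4) * hi + (-(zR^4-2*zR^2)) * hc
  · rw [A2, Matrix.det_fin_two_of, hq]
    linear_combination (-(2*(1-zR^2) + (xR^2+yR^2+zR^2-1))) * hs +
      (2*(xR^2+yR^2)*yR^2 - (iR^2+1)*yR^4) * hi + (zR^4-2*zR^2) * hc
end
end

section
/- Fix n ≥ 1 and P, Q ∈ ℝ[z] with (1+z)ⁿP + (1−z)ⁿQ = 1. Let R = ℂ[x,y,z]/(x² + y² + z² − 1) and define Aₙ = [[(x − iy)ⁿ(P + Q), (1 − z)ⁿ − (1 + z)ⁿ], [−(1+z)ⁿP² + (1−z)ⁿQ², −(x + iy)ⁿ(P + Q)]] ∈ M₂(R). Then Aₙ · Āₙ = I₂, where Āₙ is obtained from Aₙ by applying the involution of R fixing x, y, z and sending i to −i. -/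
open MvPolynomial Matrix

noncomputable section

/-- The matrix `Aₙ` built from `n` and real polynomials `P, Q` (evaluated at `z`). -/
def An (n : ℕ) (P Q : Polynomial ℝ) : Matrix (Fin 2) (Fin 2) Rc :=
  let p : Rc := Polynomial.aeval zR P
  let q : Rc := Polynomial.aeval zR Q
  !![(xR - iR * yR) ^ n * (p + q), (1 - zR) ^ n - (1 + zR) ^ n;
     -((1 + zR) ^ n * p ^ 2) + (1 - zR) ^ n * q ^ 2, -((xR + iR * yR) ^ n * (p + q))]

/-- `Āₙ`, obtained from `Aₙ` by the involution fixing `x, y, z` and sending `i ↦ −i`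
(`P` and `Q` have real coefficients, hence are fixed). -/
def Anbar (n : ℕ) (P Q : Polynomial ℝ) : Matrix (Fin 2) (Fin 2) Rc :=
  let p : Rc := Polynomial.aeval zR P
  let q : Rc := Polynomial.aeval zR Q
  !![(xR + iR * yR) ^ n * (p + q), (1 - zR) ^ n - (1 + zR) ^ n;
     -((1 + zR) ^ n * p ^ 2) + (1 - zR) ^ n * q ^ 2, -((xR - iR * yR) ^ n * (p + q))]

set_option maxHeartbeats 1600000 in
/-- if `(1+z)ⁿ P + (1−z)ⁿ Q = 1` in `ℝ[z]` and `n ≥ 1`, then `Aₙ · Āₙ = I₂`. -/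
theorem An_real_structure (n : ℕ) (hn : 1 ≤ n) (P Q : Polynomial ℝ)
    (hPQ : (1 + Polynomial.X) ^ n * P + (1 - Polynomial.X) ^ n * Q = 1) :
    An n P Q * Anbar n P Q = 1 := by

  classical
  set p : Rc := Polynomial.aeval zR P with hp
  set q : Rc := Polynomial.aeval zR Q with hq
  have hi : iR * iR = -1 := by
    unfold iR
    rw [← _root_.map_mul, ← C_mul, Complex.I_mul_I, map_neg, _root_.map_one, map_neg,
      _root_.map_one]
  have hs : xR ^ 2 + yR ^ 2 + zR ^ 2 = 1 := by
    have h0 : Ideal.Quotient.mk Isph (X 0 ^ 2 + X 1 ^ 2 + X 2 ^ 2 - 1) = 0 :=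
      Ideal.Quotient.eq_zero_iff_mem.mpr (Ideal.subset_span rfl)
    have := sub_eq_zero.mp (by simpa [map_add, map_sub, map_pow] using h0)
    simpa [xR, yR, zR] using this
  have h1 : (xR - iR * yR) * (xR + iR * yR) = (1 - zR) * (1 + zR) := by
    linear_combination hs - yR ^ 2 * hi
  have hk : (xR - iR * yR) ^ n * (xR + iR * yR) ^ n = (1 - zR) ^ n * (1 + zR) ^ n := by
    rw [← mul_pow, ← mul_pow, h1]
  have hpq : (1 + zR) ^ n * p + (1 - zR) ^ n * q = 1 := by
    have := congrArg (Polynomial.aeval zR) hPQ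
    simpa [map_add, map_sub, map_pow] using this
  simp only [An, Anbar]
  rw [Matrix.mul_fin_two, Matrix.one_fin_two]
  have e00 : (xR - iR * yR) ^ n * (p + q) * ((xR + iR * yR) ^ n * (p + q)) +
      ((1 - zR) ^ n - (1 + zR) ^ n) * (-((1 + zR) ^ n * p ^ 2) + (1 - zR) ^ n * q ^ 2) = 1 := by
    linear_combination (p + q) ^ 2 * hk + ((1 + zR) ^ n * p + (1 - zR) ^ n * q + 1) * hpq
  have e01 : (xR - iR * yR) ^ n * (p + q) * ((1 - zR) ^ n - (1 + zR) ^ n) +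
      ((1 - zR) ^ n - (1 + zR) ^ n) * -((xR - iR * yR) ^ n * (p + q)) = 0 := by ring
  have e10 : (-((1 + zR) ^ n * p ^ 2) + (1 - zR) ^ n * q ^ 2) * ((xR + iR * yR) ^ n * (p + q)) +
      -((xR + iR * yR) ^ n * (p + q)) * (-((1 + zR) ^ n * p ^ 2) + (1 - zR) ^ n * q ^ 2) = 0 := by
    ring
  have e11 : (-((1 + zR) ^ n * p ^ 2) + (1 - zR) ^ n * q ^ 2) * ((1 - zR) ^ n - (1 + zR) ^ n) +
      -((xR + iR * yR) ^ n * (p + q)) * -((xR - iR * yR) ^ n * (p + q)) = 1 := by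
    linear_combination (p + q) ^ 2 * hk + ((1 + zR) ^ n * p + (1 - zR) ^ n * q + 1) * hpq
  rw [e00, e01, e10, e11]
end
end

section
/- With notation as above (n ≥ 1, (1+z)ⁿP + (1−z)ⁿQ = 1 in ℝ[z], R = ℂ[x,y,z]/(x² + y² + z² − 1)), the matrix Aₙ = [[(x − iy)ⁿ(P + Q), (1 − z)ⁿ − (1 + z)ⁿ], [−(1+z)ⁿP² + (1−z)ⁿQ², −(x + iy)ⁿ(P + Q)]] has determinant equal to −1 in R. -/
open MvPolynomial Matrix

noncomputable section

set_option maxHeartbeats 1000000 in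
/-- if `(1+z)ⁿ P + (1−z)ⁿ Q = 1` in `ℝ[z]` and `n ≥ 1`, then `det Aₙ = −1` in `R`. -/
theorem An_det_eq_neg_one (n : ℕ) (hn : 1 ≤ n) (P Q : Polynomial ℝ)
    (hPQ : (1 + Polynomial.X) ^ n * P + (1 - Polynomial.X) ^ n * Q = 1) :
    (An n P Q).det = -1 := by
  set p : Rc := Polynomial.aeval zR P with hp
  set q : Rc := Polynomial.aeval zR Q with hq
  have h0 : (Ideal.Quotient.mk Isph) (X 0 ^ 2 + X 1 ^ 2 + X 2 ^ 2 - 1) = 0 :=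
    Ideal.Quotient.eq_zero_iff_mem.mpr (Ideal.subset_span rfl)
  have hrel : xR ^ 2 + yR ^ 2 + zR ^ 2 - 1 = 0 := by
    simpa [xR, yR, zR, map_add, map_sub, map_pow, _root_.map_one] using h0
  have hi : iR ^ 2 = -1 := by
    have : iR ^ 2 = Ideal.Quotient.mk Isph (C (Complex.I ^ 2)) := by
      simp [iR, ← map_pow]
    rw [this, Complex.I_sq]
    simp
  have hxy : (xR - iR * yR) * (xR + iR * yR) = (1 - zR) * (1 + zR) := by
    linear_combination hrel - yR ^ 2 * hi
  have hpow : (xR - iR * yR) ^ n * (xR + iR * yR) ^ n = (1 - zR) ^ n * (1 + zR) ^ n := by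
    rw [← mul_pow, hxy, mul_pow]
  have h1 : (1 + zR) ^ n * p + (1 - zR) ^ n * q = 1 := by
    have h := congrArg (Polynomial.aeval zR) hPQ
    rw [map_add, _root_.map_mul, _root_.map_mul, map_pow, map_pow, map_add, map_sub,
      _root_.map_one, Polynomial.aeval_X] at h
    rw [hp, hq]
    exact h
  rw [An, Matrix.det_fin_two_of]
  linear_combination (-(p + q) ^ 2) * hpow -
    ((1 + zR) ^ n * p + (1 - zR) ^ n * q + 1) * h1
end
end

section
/- Fix n ≥ 1 and P, Q ∈ ℝ[z] with (1+z)ⁿP + (1−z)ⁿQ = 1. In the localization R' of R = ℂ[x,y,z]/(x² + y² + z² − 1) at the multiplicative set generated by (1+z) and (1−z), define M₊ = [[((x−iy)/(1+z))ⁿ, (1+z)ⁿ], [−P, (x+iy)ⁿQ]], M₋ = [[(1−z)ⁿ, ((x−iy)/(1−z))ⁿ], [−(x+iy)ⁿP, Q]], and Dₙ = diag((x+iy)ⁿ, (x+iy)⁻ⁿ) (note x+iy is invertible in R' since (x+iy)(x−iy) = (1−z)(1+z)). Then det M₊ = det M₋ = 1 and M₊ · Dₙ = M₋. -/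
open MvPolynomial Matrix
set_option synthInstance.maxHeartbeats 1000000
set_option maxHeartbeats 2000000

noncomputable section

/-- The localization `R'` of `R` at the multiplicative set generated by `1+z` and `1−z`. -/
abbrev Rloc : Type := Localization (Submonoid.closure ({1 + zR, 1 - zR} : Set Rc))

def f : Rc →+* Rloc := algebraMap Rc Rloc

/-- `M₊ = [[((x−iy)/(1+z))ⁿ, (1+z)ⁿ], [−P, (x+iy)ⁿ Q]]`, where `u = (1+z)⁻¹`. -/
def Mplus (n : ℕ) (P Q : Polynomial ℝ) (u : Rloc) : Matrix (Fin 2) (Fin 2) Rloc :=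
  !![(f (xR - iR * yR) * u) ^ n, f ((1 + zR) ^ n);
     -(f (Polynomial.aeval (R := ℝ) zR P)), f ((xR + iR * yR) ^ n) * f (Polynomial.aeval (R := ℝ) zR Q)]

/-- `M₋ = [[(1−z)ⁿ, ((x−iy)/(1−z))ⁿ], [−(x+iy)ⁿP, Q]]`, where `v = (1−z)⁻¹`. -/
def Mminus (n : ℕ) (P Q : Polynomial ℝ) (v : Rloc) : Matrix (Fin 2) (Fin 2) Rloc :=
  !![f ((1 - zR) ^ n), (f (xR - iR * yR) * v) ^ n;
     -(f ((xR + iR * yR) ^ n) * f (Polynomial.aeval (R := ℝ) zR P)), f (Polynomial.aeval (R := ℝ) zR Q)]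

/-- `Dₙ = diag((x+iy)ⁿ, (x+iy)⁻ⁿ)`, where `w = (x+iy)⁻¹`. -/
def Dn (n : ℕ) (w : Rloc) : Matrix (Fin 2) (Fin 2) Rloc :=
  !![f ((xR + iR * yR) ^ n), 0; 0, w ^ n]

instance : AddCancelCommMonoid Rloc := inferInstance

/-- with `(1+z)ⁿ P + (1−z)ⁿ Q = 1`, in the localization `R'` the elements
`1+z`, `1−z` and `x+iy` are invertible (the latter since `(x+iy)(x−iy) = (1−z)(1+z)`), and for
their inverses `u, v, w` one has `det M₊ = det M₋ = 1` and `M₊ · Dₙ = M₋`. -/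
theorem transition_matrices (n : ℕ) (hn : 1 ≤ n) (P Q : Polynomial ℝ)
    (hPQ : (1 + Polynomial.X) ^ n * P + (1 - Polynomial.X) ^ n * Q = 1) :
    (∃ u : Rloc, f (1 + zR) * u = 1) ∧ (∃ v : Rloc, f (1 - zR) * v = 1) ∧
    (∃ w : Rloc, f (xR + iR * yR) * w = 1) ∧
    ∀ u v w : Rloc, f (1 + zR) * u = 1 → f (1 - zR) * v = 1 →
      f (xR + iR * yR) * w = 1 →
      (Mplus n P Q u).det = 1 ∧ (Mminus n P Q v).det = 1 ∧
        Mplus n P Q u * Dn n w = Mminus n P Q v := by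

  -- basic identities in Rc
  have h0 : xR ^ 2 + yR ^ 2 + zR ^ 2 - 1 = 0 := by
    have h : Ideal.Quotient.mk Isph (X 0 ^ 2 + X 1 ^ 2 + X 2 ^ 2 - 1) = 0 :=
      Ideal.Quotient.eq_zero_iff_mem.mpr (Ideal.subset_span rfl)
    simpa [xR, yR, zR, map_add, map_pow, map_sub, _root_.map_one] using h
  have hi2 : iR ^ 2 = -1 := by
    rw [iR, ← map_pow, ← C_pow, Complex.I_sq]
    simp
  have hbaR : (xR + iR * yR) * (xR - iR * yR) = (1 - zR) * (1 + zR) := by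
    linear_combination h0 - yR ^ 2 * hi2
  have hpqR : (1 + zR) ^ n * Polynomial.aeval (R := ℝ) zR P
      + (1 - zR) ^ n * Polynomial.aeval (R := ℝ) zR Q = 1 := by
    have h := congrArg (Polynomial.aeval (R := ℝ) zR) hPQ
    simpa [map_add, _root_.map_mul, map_pow, map_sub, _root_.map_one] using h
  -- units
  have hus : IsUnit (f (1 + zR)) :=
    IsLocalization.map_units Rloc (⟨1 + zR, Submonoid.subset_closure (Set.mem_insert _ _)⟩ : Submonoid.closure ({1 + zR, 1 - zR} : Set Rc))
  have hvs : IsUnit (f (1 - zR)) :=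
    IsLocalization.map_units Rloc
      (⟨1 - zR, Submonoid.subset_closure (Set.mem_insert_iff.mpr (Or.inr rfl))⟩ :
        Submonoid.closure ({1 + zR, 1 - zR} : Set Rc))
  obtain ⟨u0, hu0⟩ := hus.exists_right_inv
  obtain ⟨v0, hv0⟩ := hvs.exists_right_inv
  have hba' : f (xR + iR * yR) * f (xR - iR * yR) = f (1 - zR) * f (1 + zR) := by
    rw [← _root_.map_mul, ← _root_.map_mul, hbaR]
  refine ⟨⟨u0, hu0⟩, ⟨v0, hv0⟩, ⟨f (xR - iR * yR) * u0 * v0, by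
      linear_combination u0 * v0 * hba' + f (1 - zR) * v0 * hu0 + hv0⟩, ?_⟩
  intro u v w hu hv hw
  have hpq' : f (1 + zR) ^ n * f (Polynomial.aeval (R := ℝ) zR P)
      + f (1 - zR) ^ n * f (Polynomial.aeval (R := ℝ) zR Q) = 1 := by
    have h := congrArg f hpqR
    rw [map_add, _root_.map_mul, _root_.map_mul, map_pow, map_pow, _root_.map_one] at h
    exact h
  have key1 : f (xR - iR * yR) * u * f (xR + iR * yR) = f (1 - zR) := by
    linear_combination u * hba' + f (1 - zR) * hu
  have key2 : f (xR - iR * yR) * v * f (xR + iR * yR) = f (1 + zR) := by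
    linear_combination v * hba' + f (1 + zR) * hv
  have e1 : (f (xR - iR * yR) * u) ^ n * f (xR + iR * yR) ^ n = f (1 - zR) ^ n := by
    rw [← mul_pow, key1]
  have e2 : (f (xR - iR * yR) * v) ^ n * f (xR + iR * yR) ^ n = f (1 + zR) ^ n := by
    rw [← mul_pow, key2]
  have hbw : f (xR + iR * yR) ^ n * w ^ n = 1 := by rw [← mul_pow, hw, one_pow]
  refine ⟨?_, ?_, ?_⟩
  · rw [Mplus, Matrix.det_fin_two_of, map_pow, map_pow]
    linear_combination f (Polynomial.aeval (R := ℝ) zR Q) * e1 + hpq'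
  · rw [Mminus, Matrix.det_fin_two_of, map_pow, map_pow]
    linear_combination f (Polynomial.aeval (R := ℝ) zR P) * e2 + hpq'
  · have hb : IsUnit (f (xR + iR * yR)) := IsUnit.of_mul_eq_one _ hw
    have hswb : f (1 + zR) * w * f (xR + iR * yR)
        = f (xR - iR * yR) * v * f (xR + iR * yR) := by
      linear_combination f (1 + zR) * hw - key2
    have hsw : f (1 + zR) * w = f (xR - iR * yR) * v := hb.mul_right_cancel hswb
    have h2 : (f (1 + zR) * w) ^ n = (f (xR - iR * yR) * v) ^ n := by rw [hsw]
    ext i j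
    fin_cases i <;> fin_cases j <;>
      simp only [Mplus, Mminus, Dn, Matrix.mul_apply, Fin.sum_univ_two, map_pow,
        Matrix.cons_val', Matrix.cons_val_zero, Matrix.cons_val_one, Matrix.head_cons,
        Matrix.empty_val', Matrix.cons_val_fin_one, Matrix.head_fin_const, Fin.isValue,
        Matrix.of_apply, Fin.mk_zero, Fin.mk_one, mul_zero, zero_mul, add_zero, zero_add,
        neg_mul, mul_neg]
    · linear_combination e1
    · linear_combination h2
    · ring
    · linear_combination f (Polynomial.aeval (R := ℝ) zR Q) * hbw
end
end
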